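/- arXiv:1405.0732 — 2 statements merged into one kernel-verified Lean document; each statement's English description precedes it below -/
import Mathlib

section
/- Let R be a probability measure on (Ω, 𝓕), let M be a bounded random variable, let 𝓖 ⊆ 𝓕 be a sub-σ-algebra, and let K be a 𝓖-measurable random variable with R(M ≥ K | 𝓖) > 0 a.s. Define the density Z = 1_{M ≥ K} / R(M ≥ K | 𝓖). Then Z ≥ 0, E^R[Z | 𝓖] = 1 a.s., and the measure R' defined by dR'/dR = Z is a probability measure with E^{R'}[M] ≥ E^R[K]. -/
open MeasureTheory Filter
open scoped ENNReal NNReal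

lemma aux_indicator_int {Ω : Type*} {ms : MeasurableSpace Ω} (μ : Measure Ω)
    [IsFiniteMeasure μ] {s : Set Ω} (hs : MeasurableSet s) :
    Integrable (Set.indicator s (fun _ => (1 : ℝ))) μ :=
  (integrable_const (1 : ℝ)).indicator hs

lemma aux_int_withDensity {Ω : Type*} {ms : MeasurableSpace Ω} (μ : Measure Ω)
    {f : Ω → ℝ≥0} (hf : Measurable f) (g : Ω → ℝ) :
    ∫ x, g x ∂μ.withDensity (fun x => (f x : ℝ≥0∞)) = ∫ x, f x • g x ∂μ :=
  integral_withDensity_eq_integral_smul hf g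

/-- Single-period tilting density: with `p = R(M ≥ K | 𝓖) > 0` a.s. and
`Z = 1_{M ≥ K}/p`, we have `Z ≥ 0` a.s., `E^R[Z | 𝓖] = 1` a.s., the measure `R'` with
density `Z` is a probability measure, and `E^{R'}[M] ≥ E^R[K]`. -/
theorem stmt_8 {Ω : Type*} (m : MeasurableSpace Ω) {m0 : MeasurableSpace Ω} (R : Measure Ω) [IsProbabilityMeasure R]
    (hm : m ≤ m0)
    (M : Ω → ℝ) (hMmeas : Measurable M) (C : ℝ) (hMbdd : ∀ ω, |M ω| ≤ C)
    (K : Ω → ℝ) (hKmeas : StronglyMeasurable[m] K) (hKint : Integrable K R)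
    (p : Ω → ℝ)
    (hp : p = R[Set.indicator {ω | K ω ≤ M ω} (fun _ => (1 : ℝ)) | m])
    (hppos : ∀ᵐ ω ∂ R, 0 < p ω)
    (Z : Ω → ℝ)
    (hZ : Z = fun ω => Set.indicator {ω' | K ω' ≤ M ω'} (fun _ => (1 : ℝ)) ω / p ω) :
    (∀ᵐ ω ∂ R, 0 ≤ Z ω) ∧ (R[Z | m] =ᵐ[R] fun _ => 1) ∧
      IsProbabilityMeasure (R.withDensity (fun ω => ENNReal.ofReal (Z ω))) ∧
      ∫ ω, K ω ∂ R ≤ ∫ ω, M ω ∂(R.withDensity (fun ω => ENNReal.ofReal (Z ω))) := by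
  haveI : IsFiniteMeasure (R.trim hm) := isFiniteMeasure_trim hm
  set f : Ω → ℝ := Set.indicator {ω | K ω ≤ M ω} (fun _ => (1 : ℝ)) with hf
  have hKm0 : Measurable[m0] K := (hKmeas.measurable).mono hm le_rfl
  have hMm0 : Measurable[m0] M := hMmeas
  have hAmeas : MeasurableSet[m0] {ω | K ω ≤ M ω} := measurableSet_le hKm0 hMm0
  have hf_meas : Measurable[m0] f := measurable_const.indicator hAmeas
  have hf_nonneg : ∀ ω, 0 ≤ f ω := fun ω => Set.indicator_nonneg (fun _ _ => zero_le_one) ω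
  have hf_int : Integrable f R := aux_indicator_int (ms := m0) R hAmeas
  have hp_sm : StronglyMeasurable[m] p := hp ▸ stronglyMeasurable_condExp
  have hp_m : Measurable[m] p := hp_sm.measurable
  have hp_m0 : Measurable[m0] p := hp_m.mono hm le_rfl
  have hp_int : Integrable p R := hp ▸ integrable_condExp
  have hp_nonneg : 0 ≤ᵐ[R] p := hp ▸ condExp_nonneg (Eventually.of_forall hf_nonneg)
  -- key pull-out lemma at the lintegral level
  have keyA : ∀ G : Ω → ℝ≥0∞, Measurable[m] G →
      ∫⁻ ω, ENNReal.ofReal (f ω) * G ω ∂ R = ∫⁻ ω, ENNReal.ofReal (p ω) * G ω ∂ R := by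
    intro G hG
    have hGm0 : Measurable[m0] G := hG.mono hm le_rfl
    have htrim : (R.withDensity fun ω => ENNReal.ofReal (f ω)).trim hm
        = (R.withDensity fun ω => ENNReal.ofReal (p ω)).trim hm := by
      refine @Measure.ext _ m _ _ (fun s hs => ?_)
      rw [trim_measurableSet_eq hm hs, trim_measurableSet_eq hm hs,
        withDensity_apply _ (hm s hs), withDensity_apply _ (hm s hs),
        ← ofReal_integral_eq_lintegral_ofReal hf_int.restrict
          (ae_restrict_of_ae (Eventually.of_forall hf_nonneg)),
        ← ofReal_integral_eq_lintegral_ofReal hp_int.restrict (ae_restrict_of_ae hp_nonneg),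
        hp, setIntegral_condExp hm hf_int hs]
    calc ∫⁻ ω, ENNReal.ofReal (f ω) * G ω ∂ R
        = ∫⁻ ω, G ω ∂(R.withDensity fun ω => ENNReal.ofReal (f ω)) :=
          (lintegral_withDensity_eq_lintegral_mul R hf_meas.ennreal_ofReal hGm0).symm
      _ = ∫⁻ ω, G ω ∂((R.withDensity fun ω => ENNReal.ofReal (f ω)).trim hm) :=
          (lintegral_trim hm hG).symm
      _ = ∫⁻ ω, G ω ∂((R.withDensity fun ω => ENNReal.ofReal (p ω)).trim hm) := by rw [htrim]
      _ = ∫⁻ ω, G ω ∂(R.withDensity fun ω => ENNReal.ofReal (p ω)) := lintegral_trim hm hG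
      _ = ∫⁻ ω, ENNReal.ofReal (p ω) * G ω ∂ R :=
          lintegral_withDensity_eq_lintegral_mul R hp_m0.ennreal_ofReal hGm0
  have hZmeas : Measurable[m0] Z := by rw [hZ]; exact hf_meas.div hp_m0
  have hZnonneg : ∀ᵐ ω ∂ R, 0 ≤ Z ω := by
    filter_upwards [hppos] with ω hω
    rw [hZ]
    exact div_nonneg (hf_nonneg ω) hω.le
  -- a.e. identification of ofReal Z
  have hZae : (fun ω => ENNReal.ofReal (Z ω))
      =ᵐ[R] fun ω => ENNReal.ofReal (f ω) * (ENNReal.ofReal (p ω))⁻¹ := by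
    filter_upwards [hppos] with ω hω
    rw [hZ]
    simp only
    rw [ENNReal.ofReal_div_of_pos hω, div_eq_mul_inv]
  have hPinv_m : Measurable[m] fun ω => (ENNReal.ofReal (p ω))⁻¹ :=
    hp_m.ennreal_ofReal.inv
  have hcancel : ∀ᵐ ω ∂ R, ENNReal.ofReal (p ω) * (ENNReal.ofReal (p ω))⁻¹ = 1 := by
    filter_upwards [hppos] with ω hω
    exact ENNReal.mul_inv_cancel (by simpa using hω) ENNReal.ofReal_ne_top
  have hZlint : ∫⁻ ω, ENNReal.ofReal (Z ω) ∂ R = 1 := by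
    calc ∫⁻ ω, ENNReal.ofReal (Z ω) ∂ R
        = ∫⁻ ω, ENNReal.ofReal (f ω) * (ENNReal.ofReal (p ω))⁻¹ ∂ R := lintegral_congr_ae hZae
      _ = ∫⁻ ω, ENNReal.ofReal (p ω) * (ENNReal.ofReal (p ω))⁻¹ ∂ R := keyA _ hPinv_m
      _ = ∫⁻ _, (1 : ℝ≥0∞) ∂ R := lintegral_congr_ae hcancel
      _ = 1 := by simp
  have hprob : IsProbabilityMeasure (R.withDensity fun ω => ENNReal.ofReal (Z ω)) := by
    constructor
    rw [withDensity_apply _ MeasurableSet.univ, setLIntegral_univ, hZlint]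
  have hZint : Integrable Z R := by
    refine ⟨hZmeas.aestronglyMeasurable, ?_⟩
    rw [hasFiniteIntegral_iff_ofReal hZnonneg, hZlint]
    exact ENNReal.one_lt_top
  -- conditional expectation of Z is 1
  have hZ_eq_mul : Z = (fun ω => (p ω)⁻¹) * f := by
    rw [hZ]; funext ω; simp [div_eq_inv_mul]
  have hpinv_sm : StronglyMeasurable[m] fun ω => (p ω)⁻¹ := hp_m.inv.stronglyMeasurable
  have hcondZ : R[Z|m] =ᵐ[R] fun _ => 1 := by
    have hmul := condExp_mul_of_stronglyMeasurable_left (μ := R) hpinv_sm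
      (by rw [← hZ_eq_mul]; exact hZint) hf_int
    rw [← hZ_eq_mul] at hmul
    refine hmul.trans ?_
    filter_upwards [hppos] with ω hω
    simp only [Pi.mul_apply, ← hp]
    exact inv_mul_cancel₀ hω.ne'
  -- integrability of K * Z
  have hKZ_int : Integrable (K * Z) R := by
    refine ⟨(hKm0.mul hZmeas).aestronglyMeasurable, ?_⟩
    have h1 : (fun ω => (‖K ω * Z ω‖₊ : ℝ≥0∞))
        =ᵐ[R] fun ω => ENNReal.ofReal (f ω) *
          ((ENNReal.ofReal (p ω))⁻¹ * (‖K ω‖₊ : ℝ≥0∞)) := by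
      filter_upwards [hZnonneg, hZae] with ω hZw hZw'
      calc (‖K ω * Z ω‖₊ : ℝ≥0∞) = (‖K ω‖₊ : ℝ≥0∞) * ENNReal.ofReal (Z ω) := by
            rw [nnnorm_mul, ENNReal.coe_mul, ← Real.enorm_eq_ofReal hZw, enorm_eq_nnnorm]
        _ = (‖K ω‖₊ : ℝ≥0∞) * (ENNReal.ofReal (f ω) * (ENNReal.ofReal (p ω))⁻¹) := by rw [hZw']
        _ = ENNReal.ofReal (f ω) * ((ENNReal.ofReal (p ω))⁻¹ * (‖K ω‖₊ : ℝ≥0∞)) := by ring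
    have h2 : Measurable[m] fun ω => (ENNReal.ofReal (p ω))⁻¹ * (‖K ω‖₊ : ℝ≥0∞) :=
      hPinv_m.mul (@Measurable.nnnorm _ _ _ _ _ m _ hKmeas.measurable).coe_nnreal_ennreal
    simp only [HasFiniteIntegral, Pi.mul_apply, enorm_eq_nnnorm]
    rw [lintegral_congr_ae h1, keyA _ h2]
    have h3 : (fun ω => ENNReal.ofReal (p ω) * ((ENNReal.ofReal (p ω))⁻¹ * (‖K ω‖₊ : ℝ≥0∞)))
        =ᵐ[R] fun ω => (‖K ω‖₊ : ℝ≥0∞) := by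
      filter_upwards [hcancel] with ω hω
      rw [← mul_assoc, hω, one_mul]
    rw [lintegral_congr_ae h3]
    exact hKint.2
  -- ∫ K Z = ∫ K
  have hKZ_eq : ∫ ω, (K * Z) ω ∂ R = ∫ ω, K ω ∂ R := by
    have hmul := condExp_mul_of_stronglyMeasurable_left (μ := R) hKmeas hKZ_int hZint
    rw [← integral_condExp hm]
    refine integral_congr_ae (hmul.trans ?_)
    filter_upwards [hcondZ] with ω hω
    simp [hω]
  -- Integrable M * Z
  have hMZ_int : Integrable (M * Z) R := by
    refine hZint.bdd_mul (c := C) hMm0.aestronglyMeasurable (Eventually.of_forall fun ω => ?_)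
    simpa [Real.norm_eq_abs] using hMbdd ω
  -- K Z ≤ M Z a.e.
  have hKZ_le : (K * Z) ≤ᵐ[R] (M * Z) := by
    filter_upwards [hZnonneg] with ω hω
    simp only [Pi.mul_apply]
    by_cases hωA : ω ∈ {ω' | K ω' ≤ M ω'}
    · exact mul_le_mul_of_nonneg_right hωA hω
    · have : Z ω = 0 := by rw [hZ]; simp [hf, Set.indicator_of_notMem hωA]
      simp [this]
  -- ∫ M dR' = ∫ M Z dR
  have hMint' : ∫ ω, M ω ∂(R.withDensity fun ω => ENNReal.ofReal (Z ω))
      = ∫ ω, (M * Z) ω ∂ R := by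
    have hZnn_meas : Measurable[m0] fun ω => (Z ω).toNNReal := hZmeas.real_toNNReal
    have : (fun ω => ENNReal.ofReal (Z ω)) = fun ω => ((Z ω).toNNReal : ℝ≥0∞) := rfl
    rw [this, aux_int_withDensity (ms := m0) R hZnn_meas M]
    refine integral_congr_ae ?_
    filter_upwards [hZnonneg] with ω hω
    simp [NNReal.smul_def, Real.coe_toNNReal _ hω, mul_comm]
  refine ⟨hZnonneg, hcondZ, hprob, ?_⟩
  rw [hMint', ← hKZ_eq]
  exact integral_mono_ae hKZ_int hMZ_int hKZ_le
end

section
/- Let R be a probability measure, 𝓖 ⊆ 𝓕 a sub-σ-algebra, M a bounded random variable, and K 𝓖-measurable with p = R(M ≥ K | 𝓖) > 0 a.s. Then E^R[M · 1_{M ≥ K} / p] ≥ E^R[K · 1_{M ≥ K} / p] = E^R[K]. -/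
open MeasureTheory

/-- One-step estimate: with `p = R(M ≥ K | 𝓖) > 0` a.s.,
`E^R[M·1_{M≥K}/p] ≥ E^R[K·1_{M≥K}/p] = E^R[K]`. -/
theorem stmt_16 {Ω : Type*} (m : MeasurableSpace Ω) {m0 : MeasurableSpace Ω} (R : Measure Ω) [IsProbabilityMeasure R]
    (hm : m ≤ m0)
    (M : Ω → ℝ) (hMmeas : Measurable M) (C : ℝ) (hMbdd : ∀ ω, |M ω| ≤ C)
    (K : Ω → ℝ) (hKmeas : StronglyMeasurable[m] K) (hKint : Integrable K R)
    (p : Ω → ℝ)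
    (hp : p = R[Set.indicator {ω | K ω ≤ M ω} (fun _ => (1 : ℝ)) | m])
    (hppos : ∀ᵐ ω ∂ R, 0 < p ω)
    (hintM : Integrable
      (fun ω => M ω * Set.indicator {ω' | K ω' ≤ M ω'} (fun _ => (1 : ℝ)) ω / p ω) R)
    (hintK : Integrable
      (fun ω => K ω * Set.indicator {ω' | K ω' ≤ M ω'} (fun _ => (1 : ℝ)) ω / p ω) R) :
    (∫ ω, K ω * Set.indicator {ω' | K ω' ≤ M ω'} (fun _ => (1 : ℝ)) ω / p ω ∂ R)
        = ∫ ω, K ω ∂ R ∧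
      (∫ ω, K ω * Set.indicator {ω' | K ω' ≤ M ω'} (fun _ => (1 : ℝ)) ω / p ω ∂ R)
        ≤ ∫ ω, M ω * Set.indicator {ω' | K ω' ≤ M ω'} (fun _ => (1 : ℝ)) ω / p ω ∂ R := by
  letI : MeasurableSpace Ω := m0
  set s : Set Ω := {ω' | K ω' ≤ M ω'} with hs_def
  set ind : Ω → ℝ := Set.indicator s (fun _ => (1 : ℝ)) with hind_def
  have hs0 : MeasurableSet[m0] s := measurableSet_le (hKmeas.measurable.mono hm le_rfl) hMmeas
  have hind_int : Integrable ind R := (integrable_const (1 : ℝ)).indicator hs0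
  haveI : SigmaFinite (R.trim hm) := by
    have : IsFiniteMeasure (R.trim hm) := isFiniteMeasure_trim hm
    infer_instance
  have hpmeas : StronglyMeasurable[m] p := hp ▸ stronglyMeasurable_condExp
  have hf : StronglyMeasurable[m] (fun ω => K ω / p ω) := (hKmeas.measurable.div hpmeas.measurable).stronglyMeasurable
  have key : (fun ω => K ω / p ω) * ind = fun ω => K ω * ind ω / p ω := by
    funext ω; simp [div_mul_eq_mul_div]
  have hfg : Integrable ((fun ω => K ω / p ω) * ind) R := by
    rw [key]; exact hintK
  have hpull := condExp_mul_of_stronglyMeasurable_left (μ := R) hf hfg hind_int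
  have hK_ae : R[(fun ω => K ω / p ω) * ind | m] =ᵐ[R] K := by
    refine hpull.trans ?_
    filter_upwards [hppos] with ω hω
    simp only [Pi.mul_apply, ← hp]
    exact div_mul_cancel₀ (K ω) hω.ne'
  have h1 : (∫ ω, K ω * ind ω / p ω ∂ R) = ∫ ω, K ω ∂ R := by
    rw [← key, ← integral_condExp hm]
    exact integral_congr_ae hK_ae
  refine ⟨h1, ?_⟩
  refine integral_mono_ae hintK hintM ?_
  filter_upwards [hppos] with ω hω
  by_cases hωs : ω ∈ s
  · have hKM : K ω ≤ M ω := hωs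
    simp only [hind_def, Set.indicator_of_mem hωs, mul_one]
    gcongr
  · simp [hind_def, Set.indicator_of_notMem hωs]
end
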